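/- arXiv:1911.03104 — 3 statements merged into one kernel-verified Lean document; each statement's English description precedes it below -/
import Mathlib

section
/- For any permutation σ, every block in the maximal block decomposition of p₁(σ) contains at most 3 tokens. -/
/-!
The output of a pass is the concatenation of the successively popped stacks, each of which is
non-decreasing, so a strictly decreasing factor takes at most one token from each popped stack.
In a factor `a > b > c > d` the stacks `[b]` and `[c]` were therefore popped whole, one after the
other. But `[b]` is popped only when the next token `x` exceeds `b`, and the following stack starts
as `[x]`; it is popped as a singleton only if it is `[x]` itself, and `x > b`.
-/

/-- One pass through a deterministic pop stack, with explicit stack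
(head of `stack` is the top; the stack is increasing from top to bottom). -/
def p1Aux : List ℤ → List ℤ → List ℤ
  | stack, [] => stack
  | [], x :: xs => p1Aux [x] xs
  | t :: ts, x :: xs =>
    if t < x then (t :: ts) ++ p1Aux [x] xs else p1Aux (x :: t :: ts) xs

/-- One pass of a permutation through a deterministic pop stack. -/
def p1 (σ : List ℤ) : List ℤ := p1Aux [] σ

/-- Two lists (of the same length) are order-isomorphic. -/
def OrdIso (a b : List ℤ) : Prop :=
  a.length = b.length ∧
    ∀ i j (hia : i < a.length) (hja : j < a.length) (hib : i < b.length)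
      (hjb : j < b.length),
      (a.get ⟨i, hia⟩ < a.get ⟨j, hja⟩ ↔ b.get ⟨i, hib⟩ < b.get ⟨j, hjb⟩)

/-- `PContains β α` : β contains the pattern α. -/
def PContains (β α : List ℤ) : Prop := ∃ γ, γ.Sublist β ∧ OrdIso γ α

/-- A reduced permutation of length n is a rearrangement of 1,2,…,n. -/
def Reduced (σ : List ℤ) : Prop :=
  σ.Perm ((List.range σ.length).map fun i => (i : ℤ) + 1)

/-- σ 2-contains the pair (F, G). -/
def Contains2 (σ : List ℤ) (F G : Set (List ℤ)) : Prop :=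
  ∃ γ, γ.Sublist σ ∧ (∃ f ∈ F, OrdIso γ f) ∧
    ¬ ∃ δ, δ.Sublist σ ∧ γ.Sublist δ ∧ ∃ g ∈ G, OrdIso δ g

/-- The set of reduced permutations 2-avoiding (F, G). -/
def Av2 (F G : Set (List ℤ)) : Set (List ℤ) :=
  {σ | Reduced σ ∧ ¬ Contains2 σ F G}

/-- `Bs` is the maximal block decomposition of σ: nonempty strictly
decreasing blocks, with the last entry of each block smaller than the
first entry of the next. -/
def IsBlockDecomp (σ : List ℤ) (Bs : List (List ℤ)) : Prop :=
  σ = Bs.flatten ∧ (∀ B ∈ Bs, B ≠ [] ∧ B.Pairwise (· > ·)) ∧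
    Bs.Chain' (fun B C => ∀ x ∈ B.getLast?, ∀ y ∈ C.head?, x < y)

theorem List.length_le_one_of_pairwise_le_of_pairwise_gt {α : Type*} [Preorder α] {u : List α}
    (hle : u.Pairwise (· ≤ ·)) (hgt : u.Pairwise (· > ·)) : u.length ≤ 1 :=
  match u, hle, hgt with
  | [], _, _ | [_], _, _ => by simp
  | _ :: _ :: _, hle, hgt =>
    absurd (List.rel_of_pairwise_cons hle List.mem_cons_self)
      (not_le_of_gt (List.rel_of_pairwise_cons hgt List.mem_cons_self))

theorem List.prefix_append_cases {α : Type*} {u s o : List α} (h : u <+: s ++ o) :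
    u <+: s ∨ ∃ w, u = s ++ w ∧ w <+: o := by
  obtain ⟨r, hr⟩ := h
  rcases List.append_eq_append_iff.mp hr with ⟨a, rfl, -⟩ | ⟨w, rfl, rfl⟩
  · exact Or.inl (List.prefix_append u a)
  · exact Or.inr ⟨w, rfl, List.prefix_append w r⟩

/-- The invariant of a pass started with stack `s` (top first) that outputs `o`. -/
structure ShortDescents (s o : List ℤ) : Prop where
  infix_le : ∀ u, u <:+: o → u.Pairwise (· > ·) → u.length ≤ 3
  prefix_le : ∀ u, u <+: o → u.Pairwise (· > ·) → u.length ≤ 2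
  eq_singleton_of_head_descent : ∀ a b rest, o = a :: b :: rest → b < a → s = [a]

namespace ShortDescents

theorem self {s : List ℤ} (hs : s.Pairwise (· ≤ ·)) : ShortDescents s s where
  infix_le u hu hdec :=
    (List.length_le_one_of_pairwise_le_of_pairwise_gt (hs.sublist hu.sublist) hdec).trans
      (by norm_num)
  prefix_le u hu hdec :=
    (List.length_le_one_of_pairwise_le_of_pairwise_gt (hs.sublist hu.sublist) hdec).trans
      (by norm_num)
  eq_singleton_of_head_descent a b rest hsab hba := by
    subst hsab
    exact absurd (List.rel_of_pairwise_cons hs (by simp)) (not_le_of_gt hba)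

theorem of_ne_singleton {s s' o : List ℤ} (h : ShortDescents s' o) (hs' : ∀ a, s' ≠ [a]) :
    ShortDescents s o where
  infix_le := h.infix_le
  prefix_le := h.prefix_le
  eq_singleton_of_head_descent a b rest ho hba :=
    absurd (h.eq_singleton_of_head_descent a b rest ho hba) (hs' a)

theorem cons_append {t x : ℤ} {ts o : List ℤ} (hs : (t :: ts).Pairwise (· ≤ ·)) (htx : t < x)
    (ho : ShortDescents [x] o) : ShortDescents (t :: ts) (t :: ts ++ o) where
  infix_le u hu hdec := by
    rcases List.infix_append_iff.mp hu with hu | hu | ⟨v, w, rfl, hv, hw⟩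
    · have := List.length_le_one_of_pairwise_le_of_pairwise_gt (hs.sublist hu.sublist) hdec
      omega
    · exact ho.infix_le u hu hdec
    · have hv := List.length_le_one_of_pairwise_le_of_pairwise_gt (hs.sublist hv.sublist)
        (List.pairwise_append.mp hdec).1
      have hw := ho.prefix_le w hw (List.pairwise_append.mp hdec).2.1
      simp only [List.length_append]
      omega
  prefix_le u hu hdec := by
    rcases List.prefix_append_cases hu with hu | ⟨w, rfl, hw⟩
    · have := List.length_le_one_of_pairwise_le_of_pairwise_gt (hs.sublist hu.sublist) hdec
      omega
    obtain rfl : ts = [] := by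
      simpa using
        List.length_le_one_of_pairwise_le_of_pairwise_gt hs (List.pairwise_append.mp hdec).1
    match w, hw, hdec with
    | [], _, _ | [_], _, _ => simp
    | b :: c :: _, ⟨r, hr⟩, hdec =>
      have hbt : b < t := List.rel_of_pairwise_cons hdec (by simp)
      have hcb : c < b := List.rel_of_pairwise_cons (List.pairwise_cons.mp hdec).2 (by simp)
      have hxb : [x] = [b] := ho.eq_singleton_of_head_descent b c _ hr.symm hcb
      simp only [List.cons.injEq, and_true] at hxb
      omega
  eq_singleton_of_head_descent a b rest hso hba := by
    cases ts with
    | nil => simpa using congrArg List.head? hso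
    | cons t' ts =>
      simp only [List.cons_append, List.cons.injEq] at hso
      obtain ⟨rfl, rfl, -⟩ := hso
      exact absurd (List.rel_of_pairwise_cons hs (by simp)) (not_le_of_gt hba)

end ShortDescents

theorem shortDescents_p1Aux (xs : List ℤ) :
    ∀ {t : ℤ} {ts : List ℤ}, (t :: ts).Pairwise (· ≤ ·) →
      ShortDescents (t :: ts) (p1Aux (t :: ts) xs) := by
  induction xs with
  | nil => exact fun hs => ShortDescents.self hs
  | cons x xs ih =>
    intro t ts hs
    by_cases htx : t < x
    · rw [p1Aux, if_pos htx]
      exact .cons_append hs htx (ih (List.pairwise_singleton _ x))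
    · rw [p1Aux, if_neg htx]
      exact (ih (hs.cons_cons_of_trans (not_lt.mp htx))).of_ne_singleton (by simp)

theorem length_le_three_of_infix_p1 (σ : List ℤ) {u : List ℤ} (hu : u <:+: p1 σ)
    (hdec : u.Pairwise (· > ·)) : u.length ≤ 3 := by
  cases σ with
  | nil =>
    rw [List.eq_nil_of_infix_nil hu]
    simp
  | cons x xs => exact (shortDescents_p1Aux xs (List.pairwise_singleton _ x)).infix_le u hu hdec

theorem stmt_1_general (σ : List ℤ) (Bs : List (List ℤ))
    (hB : IsBlockDecomp (p1 σ) Bs) :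
    ∀ B ∈ Bs, B.length ≤ 3 := by
  intro B hBs
  obtain ⟨hflat, hblocks, -⟩ := hB
  exact length_le_three_of_infix_p1 σ (hflat ▸ List.infix_of_mem_flatten hBs) (hblocks B hBs).2

/-- every block of the maximal block decomposition of `p1 σ`
has at most 3 tokens. -/
theorem stmt_1 (σ : List ℤ) (hσ : σ.Nodup) (Bs : List (List ℤ))
    (hB : IsBlockDecomp (p1 σ) Bs) :
    ∀ B ∈ Bs, B.length ≤ 3 :=
  stmt_1_general σ Bs hB
end

section
/- Let σ be a permutation with maximal block decomposition B₁B₂…B_m, and let a ∈ B_{i+1} and b ∈ B_{i+n} be entries with a > b and n ≥ 1. If n ≥ 3^k, then σ is not sortable by k passes through a deterministic pop stack. -/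
/-! One pass of the pop stack reverses every block. If `a ∈ B_p` and `b ∈ B_q` with `p < q`,
then `a` still precedes `b` afterwards, and between them stand the reversed blocks
`B_{p+1}, …, B_{q-1}`. Any two consecutive reversed blocks contain an ascent, since the last
entry of a block is smaller than the first entry of the next. In a permutation the block index
of an entry is the number of ascents before it, so after the pass `a` and `b` are at least
`⌊(q - p - 1) / 2⌋` blocks apart. This is at least `3 ^ k - 1` when `q - p + 1 ≥ 3 ^ (k + 1)`,
so induction on `k` reduces to `k = 0`, where `a` precedes the smaller entry `b`. -/

theorem List.exists_eq_append_getElem_cons_append_getElem_cons {α : Type*} (l : List α)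
    {p q : ℕ} (hpq : p < q) (hq : q < l.length) :
    ∃ L M R, l = L ++ l[p] :: (M ++ l[q] :: R) ∧ M.length = q - p - 1 := by
  refine ⟨l.take p, (l.drop (p + 1)).take (q - p - 1), l.drop (q + 1), ?_, by simp; omega⟩
  conv_lhs => rw [← List.take_append_drop p l, List.drop_eq_getElem_cons (by omega),
    ← List.take_append_drop (q - p - 1) (l.drop (p + 1)), List.drop_drop,
    show p + 1 + (q - p - 1) = q by omega, List.drop_eq_getElem_cons hq]

section Ascents

variable {α : Type*} [LinearOrder α]

def ascentCount : List α → ℕ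
  | x :: y :: l => (if x < y then 1 else 0) + ascentCount (y :: l)
  | _ => 0

theorem ascentCount_append_cons : ∀ (l : List α) (x : α) (r : List α),
    ascentCount (l ++ x :: r) = ascentCount (l ++ [x]) + ascentCount (x :: r)
  | [], _, _ => by simp [ascentCount]
  | [_], _, _ => by simp [ascentCount]
  | y :: z :: l, x, r => by
    have := ascentCount_append_cons (z :: l) x r
    simp only [List.cons_append, ascentCount] at this ⊢
    omega

theorem le_ascentCount_append : ∀ l r : List α,
    ascentCount l + ascentCount r ≤ ascentCount (l ++ r)
  | [], _ => by simp [ascentCount]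
  | [_], [] => by simp [ascentCount]
  | [_], _ :: _ => by simp [ascentCount]
  | x :: y :: l, r => by
    have := le_ascentCount_append (y :: l) r
    simp only [List.cons_append, ascentCount] at *
    omega

theorem ascentCount_le_of_infix {l₁ l₂ : List α} (h : l₁ <:+: l₂) :
    ascentCount l₁ ≤ ascentCount l₂ := by
  obtain ⟨s, t, rfl⟩ := h
  calc ascentCount l₁ ≤ ascentCount (s ++ l₁) := le_add_self.trans (le_ascentCount_append _ _)
    _ ≤ ascentCount (s ++ l₁ ++ t) := le_self_add.trans (le_ascentCount_append _ _)

theorem ascentCount_eq_zero_of_pairwise_gt : ∀ {l : List α}, l.Pairwise (· > ·) →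
    ascentCount l = 0
  | [], _ | [_], _ => rfl
  | x :: y :: l, h => by
    have hyx : y < x := List.rel_of_pairwise_cons h List.mem_cons_self
    simp [ascentCount, hyx.not_gt, ascentCount_eq_zero_of_pairwise_gt h.of_cons]

theorem ascentCount_append_cons_of_pairwise_gt {B : List α} {y : α} (r : List α) (hB : B ≠ [])
    (hdec : B.Pairwise (· > ·)) (hlt : ∀ x ∈ B.getLast?, x < y) :
    ascentCount (B ++ y :: r) = ascentCount (y :: r) + 1 := by
  obtain ⟨B, x, rfl⟩ := (List.eq_nil_or_concat' B).resolve_left hB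
  have hxy : x < y := hlt x (by simp)
  rw [List.append_assoc, List.singleton_append, ascentCount_append_cons,
    ascentCount_eq_zero_of_pairwise_gt hdec]
  simp [ascentCount, hxy, add_comm]

theorem ascentCount_pos_of_lt {x y : α} (hxy : x < y) (l : List α) :
    0 < ascentCount (x :: (l ++ [y])) := by
  induction l generalizing x with
  | nil => simp [ascentCount, hxy]
  | cons z l ih =>
    by_cases hxz : x < z
    · simp [ascentCount, hxz]
    · have := ih (lt_of_le_of_lt (not_lt.mp hxz) hxy)
      simp only [List.cons_append, ascentCount] at this ⊢
      omega

end Ascents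

namespace IsBlockDecomp

variable {σ : List ℤ} {Bs : List (List ℤ)}

theorem flatten_of_infix (h : IsBlockDecomp σ Bs) {M : List (List ℤ)} (hM : M <:+: Bs) :
    IsBlockDecomp M.flatten M :=
  ⟨rfl, fun B hB => h.2.1 B (hM.subset hB), h.2.2.infix hM⟩

theorem getLast_lt_head_flatten {B : List ℤ} (h : IsBlockDecomp σ (B :: Bs)) :
    ∀ x ∈ B.getLast?, ∀ y ∈ Bs.flatten.head?, x < y := by
  cases Bs with
  | nil => simp
  | cons C Cs =>
    rw [List.flatten_cons, List.head?_append_of_ne_nil _ (h.2.1 C (by simp)).1]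
    exact (List.isChain_cons_cons.mp h.2.2).1

theorem exists_findIdx_mem (h : IsBlockDecomp σ Bs) {x : ℤ} (hx : x ∈ σ) :
    ∃ hlt : Bs.findIdx (x ∈ ·) < Bs.length, x ∈ Bs[Bs.findIdx (x ∈ ·)] := by
  rw [h.1, List.mem_flatten] at hx
  have hlt := List.findIdx_lt_length_of_exists (p := fun B => decide (x ∈ B)) (by simpa using hx)
  exact ⟨hlt, by simpa using List.findIdx_getElem (w := hlt)⟩

theorem findIdx_eq_ascentCount (h : IsBlockDecomp σ Bs) (hnd : σ.Nodup) {u w : List ℤ} {x : ℤ}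
    (hσ : σ = u ++ x :: w) : Bs.findIdx (x ∈ ·) = ascentCount (u ++ [x]) := by
  induction Bs generalizing σ u with
  | nil => simp [h.1] at hσ
  | cons B Bs ih =>
    obtain ⟨hB, hdec⟩ := h.2.1 B List.mem_cons_self
    rw [h.1, List.flatten_cons] at hσ hnd
    have in_later_block : ∀ t, Bs.flatten = t ++ x :: w →
        (B :: Bs).findIdx (x ∈ ·) = ascentCount (B ++ t ++ [x]) := by
      intro t hrest
      have hxB : x ∉ B := fun hxB => (List.nodup_append.mp hnd).2.2 x hxB x (by simp [hrest]) rfl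
      obtain ⟨y, t', hy⟩ := List.exists_cons_of_ne_nil
        (List.append_ne_nil_of_right_ne_nil t (List.cons_ne_nil x []))
      have hy_head : y ∈ Bs.flatten.head? := by
        rw [hrest, ← List.singleton_append, ← List.append_assoc, hy]
        rfl
      rw [List.findIdx_cons, ih (h.flatten_of_infix (List.suffix_cons B Bs).isInfix)
        (List.nodup_append.mp hnd).2.1 hrest, List.append_assoc, hy,
        ascentCount_append_cons_of_pairwise_gt t' hB hdec
          fun z hz => h.getLast_lt_head_flatten z hz y hy_head]
      simp [hxB]
    rcases List.append_eq_append_iff.mp hσ with ⟨t, rfl, hrest⟩ | ⟨t, rfl, ht⟩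
    · exact in_later_block t hrest
    rcases List.cons_eq_append_iff.mp ht with ⟨rfl, hrest⟩ | ⟨t, rfl, -⟩
    · simpa using in_later_block [] (by simpa using hrest)
    · have hpre : (u ++ [x]).Sublist (u ++ x :: t) := by simp
      simp [List.findIdx_cons, ascentCount_eq_zero_of_pairwise_gt (hdec.sublist hpre)]

theorem findIdx_add_ascentCount (h : IsBlockDecomp σ Bs) (hnd : σ.Nodup) {u v w : List ℤ}
    {a b : ℤ} (hσ : σ = u ++ a :: (v ++ b :: w)) :
    Bs.findIdx (a ∈ ·) + ascentCount (a :: (v ++ [b])) = Bs.findIdx (b ∈ ·) := by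
  rw [h.findIdx_eq_ascentCount hnd hσ,
    h.findIdx_eq_ascentCount hnd (u := u ++ a :: v) (w := w) (by simp [hσ]),
    List.append_assoc, List.cons_append, ← ascentCount_append_cons]

theorem pair_sublist (h : IsBlockDecomp σ Bs) {p q : ℕ} (hpq : p ≤ q) (hq : q < Bs.length)
    {a b : ℤ} (ha : a ∈ Bs[p]) (hb : b ∈ Bs[q]) (hab : b < a) : [a, b].Sublist σ := by
  rcases hpq.lt_or_eq with hpq | rfl
  · obtain ⟨L, M, R, hsplit, -⟩ := Bs.exists_eq_append_getElem_cons_append_getElem_cons hpq hq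
    rw [h.1, hsplit]
    simp only [List.flatten_append, List.flatten_cons]
    refine List.Sublist.trans ?_ (List.sublist_append_right L.flatten _)
    exact (List.singleton_sublist.2 ha).append ((List.singleton_sublist.2 hb).trans
      ((List.sublist_append_left _ _).trans (List.sublist_append_right _ _)))
  · have hpair : [a, b].Sublist Bs[p] :=
      List.sublist_of_subperm_of_pairwise (r := (· > ·))
        (List.subperm_of_subset (by simp [hab.ne']) (by simp [ha, hb])) (by simp [hab])
        (h.2.1 _ (List.getElem_mem _)).2
    exact hpair.trans (h.1 ▸ List.sublist_flatten_of_mem (List.getElem_mem _))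

theorem length_div_two_le_ascentCount (h : IsBlockDecomp σ Bs) :
    Bs.length / 2 ≤ ascentCount (Bs.map List.reverse).flatten := by
  induction Bs using List.twoStepInduction generalizing σ with
  | nil | singleton => simp
  | cons_cons B C Bs ih _ =>
    obtain ⟨B, x, rfl⟩ := (List.eq_nil_or_concat' B).resolve_left (h.2.1 B (by simp)).1
    obtain ⟨y, C, rfl⟩ := List.exists_cons_of_ne_nil (h.2.1 C (by simp)).1
    have hxy : x < y := (List.isChain_cons_cons.mp h.2.2).1 x (by simp) y rfl
    have hpair := ascentCount_pos_of_lt hxy (B.reverse ++ C.reverse)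
    have hrest := ih (h.flatten_of_infix
      (List.suffix_cons _ _ |>.trans (List.suffix_cons _ _)).isInfix)
    have := le_ascentCount_append (x :: (B.reverse ++ C.reverse ++ [y]))
      (Bs.map List.reverse).flatten
    simp only [List.map_cons, List.flatten_cons, List.reverse_append, List.reverse_cons,
      List.reverse_nil, List.nil_append, List.cons_append,
      List.append_assoc, List.length_cons] at this hpair ⊢
    omega

end IsBlockDecomp

-- For a list without repetitions, the maximal runs of `≥` are its maximal decreasing blocks.
theorem isBlockDecomp_splitBy {σ : List ℤ} (hnd : σ.Nodup) :
    IsBlockDecomp σ (σ.splitBy (· ≥ ·)) := by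
  refine ⟨(List.flatten_splitBy _ σ).symm,
    fun B hB => ⟨List.ne_nil_of_mem_splitBy hB, ?_⟩, ?_⟩
  · have hB_nodup : B.Nodup :=
      (List.nodup_flatten.mp ((List.flatten_splitBy _ σ).symm ▸ hnd)).1 B hB
    have hge : B.Pairwise (· ≥ ·) := by
      simpa using (List.isChain_of_mem_splitBy hB).pairwise
    exact (hge.and hB_nodup).imp fun h => lt_of_le_of_ne h.1 (Ne.symm h.2)
  · refine (List.isChain_getLast_head_splitBy _ σ).imp ?_
    rintro B C ⟨hB, hC, hlt⟩ x hx y hy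
    rw [List.getLast?_eq_some_getLast hB, Option.mem_some_iff] at hx
    rw [List.head?_eq_some_head hC, Option.mem_some_iff] at hy
    simpa [← hx, ← hy] using hlt

theorem exists_isBlockDecomp_of_eq_append {σ u v w : List ℤ} {a b : ℤ} (hnd : σ.Nodup)
    (hσ : σ = u ++ a :: (v ++ b :: w)) :
    ∃ Bs : List (List ℤ), IsBlockDecomp σ Bs ∧
      ∃ (p q : ℕ) (hp : p < Bs.length) (hq : q < Bs.length),
        a ∈ Bs[p] ∧ b ∈ Bs[q] ∧ p + ascentCount (a :: (v ++ [b])) = q := by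
  have hBs := isBlockDecomp_splitBy hnd
  obtain ⟨hpa, ha⟩ := hBs.exists_findIdx_mem (x := a) (by simp [hσ])
  obtain ⟨hqb, hb⟩ := hBs.exists_findIdx_mem (x := b) (by simp [hσ])
  exact ⟨_, hBs, _, _, hpa, hqb, ha, hb, hBs.findIdx_add_ascentCount hnd hσ⟩

theorem p1Aux_perm (stack σ : List ℤ) : (p1Aux stack σ).Perm (stack ++ σ) := by
  induction stack, σ using p1Aux.induct with
  | case1 => simp [p1Aux]
  | case2 x xs ih => simpa [p1Aux] using ih
  | case3 t ts x xs hlt ih =>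
    rw [p1Aux, if_pos hlt]
    exact ih.append_left (t :: ts)
  | case4 t ts x xs hlt ih =>
    rw [p1Aux, if_neg hlt]
    exact ih.trans List.perm_middle.symm

theorem p1_perm (σ : List ℤ) : (p1 σ).Perm σ := p1Aux_perm [] σ

theorem p1Aux_cons_append {t : ℤ} {B : List ℤ} (h : (t :: B).IsChain (· > ·))
    (ts rest : List ℤ) : p1Aux (t :: ts) (B ++ rest) = p1Aux (B.reverse ++ t :: ts) rest := by
  induction B generalizing t ts with
  | nil => rfl
  | cons b B ih =>
    obtain ⟨hbt, hB⟩ := List.isChain_cons_cons.mp h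
    rw [List.cons_append, p1Aux, if_neg (not_lt.mpr hbt.le), ih hB]
    simp

theorem p1Aux_nil_append {B rest : List ℤ} (hB : B ≠ []) (hdec : B.Pairwise (· > ·))
    (hlt : ∀ x ∈ B.getLast?, ∀ y ∈ rest.head?, x < y) :
    p1Aux [] (B ++ rest) = B.reverse ++ p1Aux [] rest := by
  obtain ⟨b, B, rfl⟩ := List.exists_cons_of_ne_nil hB
  rw [List.cons_append, p1Aux, p1Aux_cons_append hdec.isChain]
  obtain ⟨t, ts, hts⟩ := List.exists_cons_of_ne_nil (List.reverse_ne_nil_iff.mpr hB)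
  have : B.reverse ++ [b] = t :: ts := by simpa using hts
  rw [this, hts]
  cases rest with
  | nil => simp [p1Aux]
  | cons y rest =>
    have hty : t < y := hlt t (by simp [← List.head?_reverse, hts]) y rfl
    simp [p1Aux, hty]

namespace IsBlockDecomp

variable {σ : List ℤ} {Bs : List (List ℤ)}

theorem p1_eq (h : IsBlockDecomp σ Bs) : p1 σ = (Bs.map List.reverse).flatten := by
  induction Bs generalizing σ with
  | nil => simp [h.1, p1, p1Aux]
  | cons B Bs ih =>
    obtain ⟨hB, hdec⟩ := h.2.1 B List.mem_cons_self
    rw [h.1, List.flatten_cons, p1, p1Aux_nil_append hB hdec h.getLast_lt_head_flatten]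
    simp [← ih (h.flatten_of_infix (List.suffix_cons B Bs).isInfix), p1]

theorem exists_p1_eq_append (h : IsBlockDecomp σ Bs) {p q : ℕ} (hpq : p < q)
    (hq : q < Bs.length) {a b : ℤ} (ha : a ∈ Bs[p]) (hb : b ∈ Bs[q]) :
    ∃ u v w, p1 σ = u ++ a :: (v ++ b :: w) ∧
      (q - p - 1) / 2 ≤ ascentCount (a :: (v ++ [b])) := by
  obtain ⟨L, M, R, hsplit, hM⟩ := Bs.exists_eq_append_getElem_cons_append_getElem_cons hpq hq
  obtain ⟨s, t, hst⟩ := List.append_of_mem (List.mem_reverse.mpr ha)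
  obtain ⟨s', t', hst'⟩ := List.append_of_mem (List.mem_reverse.mpr hb)
  refine ⟨(L.map List.reverse).flatten ++ s, t ++ (M.map List.reverse).flatten ++ s',
    t' ++ (R.map List.reverse).flatten, ?_, ?_⟩
  · rw [h.p1_eq, hsplit]
    simp [hst, hst']
  · have hM_decomp := h.flatten_of_infix (M := M)
      ⟨L ++ [Bs[p]], Bs[q] :: R, by simpa using hsplit.symm⟩
    have hinfix : (M.map List.reverse).flatten <:+:
        a :: (t ++ (M.map List.reverse).flatten ++ s' ++ [b]) :=
      ⟨a :: t, s' ++ [b], by simp⟩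
    simpa [hM] using hM_decomp.length_div_two_le_ascentCount.trans (ascentCount_le_of_infix hinfix)

end IsBlockDecomp

/-- if `a` lies in an earlier block, `b` in a later block,
`a > b`, and the number of blocks from the first to the second (inclusive)
is at least `3^k`, then σ is not `k`-pass pop stack sortable. -/
theorem stmt_2 (σ : List ℤ) (hσ : σ.Nodup) (Bs : List (List ℤ))
    (hB : IsBlockDecomp σ Bs) (k p q : ℕ)
    (hp : p < Bs.length) (hq : q < Bs.length) (hpq : p ≤ q)
    (a b : ℤ) (ha : a ∈ Bs.get ⟨p, hp⟩) (hb : b ∈ Bs.get ⟨q, hq⟩)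
    (hab : b < a) (hk : 3 ^ k ≤ q - p + 1) :
    ¬ (p1^[k] σ).Pairwise (· < ·) := by
  induction k generalizing σ Bs p q with
  | zero =>
    intro hsorted
    have hlt : a < b := List.rel_of_pairwise_cons
      (hsorted.sublist (hB.pair_sublist hpq hq ha hb hab)) (List.mem_singleton_self b)
    exact hab.not_gt hlt
  | succ k ih =>
    have hlt : p < q := by
      have : 3 ≤ 3 ^ (k + 1) := Nat.le_self_pow (by simp) 3
      omega
    have hnd : (p1 σ).Nodup := (p1_perm σ).nodup_iff.mpr hσ
    obtain ⟨u, v, w, hτ, hasc⟩ := hB.exists_p1_eq_append hlt hq ha hb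
    obtain ⟨Cs, hCs, p', q', hp', hq', ha', hb', hidx⟩ :=
      exists_isBlockDecomp_of_eq_append hnd hτ
    rw [Function.iterate_succ_apply]
    refine ih _ hnd Cs hCs p' q' hp' hq' (by omega) ha' hb' ?_
    rw [pow_succ] at hk
    omega
end

section
/- For k ≥ 2, the set of k-pass pop stack sortable permutations is not closed under pattern containment: 41352 is 2-pass pop stack sortable, contains the pattern 3241, but 3241 is not 2-pass pop stack sortable. -/
theorem ordIso_map_of_strictMono {f : ℤ → ℤ} (hf : StrictMono f) (a : List ℤ) :
    OrdIso (a.map f) a := by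
  refine ⟨a.length_map f, fun i j _ _ _ _ => ?_⟩
  simp only [List.get_eq_getElem, List.getElem_map]
  exact hf.lt_iff_lt

theorem p1_41352 : p1 [4, 1, 3, 5, 2] = [1, 4, 3, 2, 5] := by decide

theorem p1_14325 : p1 [1, 4, 3, 2, 5] = [1, 2, 3, 4, 5] := by decide

theorem p1_3241 : p1 [3, 2, 4, 1] = [2, 3, 1, 4] := by decide

theorem p1_2314 : p1 [2, 3, 1, 4] = [2, 1, 3, 4] := by decide

/-- 2-pass pop stack sortable permutations are not closed
under pattern containment: 41352 is 2-pass sortable, contains 3241, but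
3241 is not 2-pass sortable. -/
theorem stmt_6 :
    (p1^[2] [4, 1, 3, 5, 2]).Pairwise (· < ·) ∧
    PContains [4, 1, 3, 5, 2] [3, 2, 4, 1] ∧
    ¬ (p1^[2] [3, 2, 4, 1]).Pairwise (· < ·) := by
  refine ⟨?_, ⟨[3, 2, 4, 1].map (· + 1), by decide, ordIso_map_of_strictMono add_left_strictMono _⟩,
    ?_⟩
  · rw [Function.iterate_succ_apply, Function.iterate_one, p1_41352, p1_14325]
    decide
  · rw [Function.iterate_succ_apply, Function.iterate_one, p1_3241, p1_2314]
    decide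
end
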